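/- arXiv:2209.14791 — 5 statements merged into one kernel-verified Lean document; each statement's English description precedes it below -/
import Mathlib

section
/- Let g ≥ 2 and d ≥ 2 be integers, and let m_1, ..., m_h be positive integers with m_1 + ... + m_h = d. Then g·(d² + Σ_s m_s² − 2) − 2(d² − 1) − (m_1·m_2 + m_2·m_3 + ... + m_{h−1}·m_h) ≥ d − 1. -/
lemma chain_bound (m : ℕ → ℤ) : ∀ h : ℕ, 1 ≤ h →
    2 * ∑ s ∈ Finset.Ico 1 h, m (s - 1) * m s ≤
      2 * ∑ s ∈ Finset.range h, (m s) ^ 2 - (m 0) ^ 2 - (m (h - 1)) ^ 2 := by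
  intro h
  induction h with
  | zero => intro hh; omega
  | succ n ih =>
    intro _
    rcases Nat.eq_or_lt_of_le (Nat.one_le_iff_ne_zero.mpr (by omega : n + 1 ≠ 0)) with h1 | h1
    · simp [← h1]
      nlinarith [sq_nonneg (m 0)]
    · have hn : 1 ≤ n := by omega
      have := ih hn
      rw [Finset.sum_Ico_succ_top (by omega : 1 ≤ n), Finset.sum_range_succ]
      have hsq : 0 ≤ (m (n - 1) - m n) ^ 2 := sq_nonneg _
      simp only [Nat.add_sub_cancel]
      nlinarith [this]

/-- **Lemma 3.3 (key numerical inequality for the `g`-loop quiver).**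
Let `g ≥ 2` and `d ≥ 2` be integers and `m 0, …, m (h-1)` positive integers
(`m_1, …, m_h` in one-based notation) with `∑ m_s = d`.  Then
`g (d² + ∑ m_s² − 2) − 2 (d² − 1) − ∑_{s=2}^h m_{s-1} m_s ≥ d − 1`. -/
theorem stmt_0 (g d : ℤ) (hg : 2 ≤ g) (hd : 2 ≤ d) (h : ℕ) (m : ℕ → ℤ)
    (hm : ∀ s < h, 1 ≤ m s)
    (hsum : ∑ s ∈ Finset.range h, m s = d) :
    g * (d ^ 2 + (∑ s ∈ Finset.range h, (m s) ^ 2) - 2) - 2 * (d ^ 2 - 1)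
      - ∑ s ∈ Finset.Ico 1 h, m (s - 1) * m s ≥ d - 1 := by
  have hh : 1 ≤ h := by
    by_contra hc
    have : h = 0 := by omega
    subst this
    simp at hsum
    omega
  have hS : d ≤ ∑ s ∈ Finset.range h, (m s) ^ 2 := by
    rw [← hsum]
    apply Finset.sum_le_sum
    intro i hi
    have := hm i (Finset.mem_range.mp hi)
    nlinarith
  have hchain := chain_bound m h hh
  have h0 : 1 ≤ m 0 := hm 0 (by omega)
  have hl : 1 ≤ m (h - 1) := hm (h - 1) (by omega)
  nlinarith [sq_nonneg (m 0), sq_nonneg (m (h - 1)),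
    mul_le_mul_of_nonneg_left hS (by linarith : (0:ℤ) ≤ g - 2)]
end

section
/- Let Q be a quiver with vertex set Q_0, arrow set Q_1, and source/target maps s, t. Define the symmetrized Euler form (d,e) = ⟨d,e⟩ + ⟨e,d⟩ where ⟨d,e⟩ = Σ_{i∈Q_0} d_i e_i − Σ_{a∈Q_1} d_{s(a)} e_{t(a)}. Then (d,e) < 0 for all nonzero d, e ∈ ℕ^{Q_0} if and only if (i) Q has at least two loops at each vertex, and (ii) any pair of distinct vertices of Q is joined by at least one arrow. -/
open Finset

/-- The Euler form of a quiver with vertex set `V`, arrow set `A`,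
and source/target maps `src, tgt`. -/
def eulerForm {V A : Type} [Fintype V] [Fintype A] (src tgt : A → V)
    (d e : V → ℤ) : ℤ :=
  (∑ i : V, d i * e i) - ∑ a : A, d (src a) * e (tgt a)

/-- The symmetrized Euler form `(d,e) = ⟨d,e⟩ + ⟨e,d⟩`. -/
def symEulerForm {V A : Type} [Fintype V] [Fintype A] (src tgt : A → V)
    (d e : V → ℤ) : ℤ :=
  eulerForm src tgt d e + eulerForm src tgt e d

lemma sym_eq {V A : Type} [Fintype V] [Fintype A] (src tgt : A → V) (d e : V → ℤ) :
    symEulerForm src tgt d e =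
      2 * (∑ i : V, d i * e i)
        - ∑ a : A, (d (src a) * e (tgt a) + d (tgt a) * e (src a)) := by
  unfold symEulerForm eulerForm
  rw [Finset.sum_add_distrib]
  have h1 : ∑ i : V, e i * d i = ∑ i : V, d i * e i :=
    Finset.sum_congr rfl (fun i _ => mul_comm _ _)
  have h2 : ∑ a : A, e (src a) * d (tgt a) = ∑ a : A, d (tgt a) * e (src a) :=
    Finset.sum_congr rfl (fun a _ => mul_comm _ _)
  rw [h1, h2]; ring

/-- **Characterization of totally negative quivers** (Section 2.1): the
symmetrized Euler form is negative on all pairs of nonzero dimension vectors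
in `ℕ^{Q₀}` if and only if (i) the quiver has at least two loops at each
vertex and (ii) any two distinct vertices are joined by at least one arrow. -/
theorem stmt_5 {V A : Type} [Fintype V] [Fintype A] [DecidableEq V]
    (src tgt : A → V) :
    (∀ d e : V → ℕ, d ≠ 0 → e ≠ 0 →
        symEulerForm src tgt (fun i => (d i : ℤ)) (fun i => (e i : ℤ)) < 0)
      ↔ ((∀ i : V, 2 ≤ (Finset.univ.filter
              (fun a : A => src a = i ∧ tgt a = i)).card)
          ∧ ∀ i j : V, i ≠ j →
              ∃ a : A, (src a = i ∧ tgt a = j) ∨ (src a = j ∧ tgt a = i)) := by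
  constructor
  · intro H
    have hne : ∀ i : V, (fun k => if k = i then (1 : ℕ) else 0) ≠ 0 := by
      intro i h
      have := congrFun h i
      simp at this
    constructor
    · intro i
      have h := H (fun k => if k = i then 1 else 0) (fun k => if k = i then 1 else 0)
        (hne i) (hne i)
      rw [sym_eq] at h
      simp only [Nat.cast_ite, Nat.cast_one, Nat.cast_zero] at h
      set L := (Finset.univ.filter (fun a : A => src a = i ∧ tgt a = i)) with hL
      have hS : ∑ k : V, ((if k = i then (1:ℤ) else 0) *
          (if k = i then (1:ℤ) else 0)) = 1 := by
        rw [Finset.sum_eq_single i]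
        · simp
        · intro k _ hk; simp [hk]
        · simp
      have hA : ∑ a : A, ((if src a = i then (1:ℤ) else 0) *
            (if tgt a = i then (1:ℤ) else 0) +
            (if tgt a = i then (1:ℤ) else 0) *
            (if src a = i then (1:ℤ) else 0)) = 2 * L.card := by
        have key : ∀ a : A, ((if src a = i then (1:ℤ) else 0) *
            (if tgt a = i then (1:ℤ) else 0) +
            (if tgt a = i then (1:ℤ) else 0) *
            (if src a = i then (1:ℤ) else 0)) =
            (if src a = i ∧ tgt a = i then (2:ℤ) else 0) := by
          intro a
          by_cases h1 : src a = i <;> by_cases h2 : tgt a = i <;> simp [h1, h2]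
        rw [Finset.sum_congr rfl (fun a _ => key a), ← Finset.sum_filter, hL,
          Finset.sum_const, nsmul_eq_mul]
        ring
      rw [hS, hA] at h
      have : (1 : ℤ) < (L.card : ℤ) := by linarith
      exact_mod_cast this
    · intro i j hij
      have h := H (fun k => if k = i then 1 else 0) (fun k => if k = j then 1 else 0)
        (hne i) (hne j)
      rw [sym_eq] at h
      simp only [Nat.cast_ite, Nat.cast_one, Nat.cast_zero] at h
      by_contra hno
      push_neg at hno
      have hS : ∑ k : V, ((if k = i then (1:ℤ) else 0) *
          (if k = j then (1:ℤ) else 0)) = 0 := by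
        apply Finset.sum_eq_zero
        intro k _
        by_cases h1 : k = i
        · have hkj : k ≠ j := by rw [h1]; exact hij
          simp [h1, hkj, hij]
        · simp [h1]
      have hA : ∑ a : A, ((if src a = i then (1:ℤ) else 0) *
            (if tgt a = j then (1:ℤ) else 0) +
            (if tgt a = i then (1:ℤ) else 0) *
            (if src a = j then (1:ℤ) else 0)) = 0 := by
        apply Finset.sum_eq_zero
        intro a _
        have h1 : tgt a = j → src a ≠ i := fun hc hs => (hno a).1 hs hc
        have h2 : tgt a = i → src a ≠ j := fun hc hs => (hno a).2 hs hc
        by_cases ht : tgt a = j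
        · have hs : src a ≠ i := h1 ht
          have ht2 : tgt a ≠ i := by rw [ht]; exact Ne.symm hij
          simp [hs, ht2]
        · by_cases ht2 : tgt a = i
          · have hs2 : src a ≠ j := h2 ht2
            simp [ht, hs2]
          · simp [ht, ht2]
      rw [hS, hA] at h
      simp at h
  · rintro ⟨hloop, harr⟩ d e hd he
    rw [sym_eq]
    set D : V → ℤ := fun k => (d k : ℤ) with hD
    set E : V → ℤ := fun k => (e k : ℤ) with hE
    have hD0 : ∀ k, 0 ≤ D k := fun k => Int.natCast_nonneg _
    have hE0 : ∀ k, 0 ≤ E k := fun k => Int.natCast_nonneg _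
    set f : A → ℤ := fun a => D (src a) * E (tgt a) + D (tgt a) * E (src a) with hf
    have hf0 : ∀ a, 0 ≤ f a := fun a =>
      add_nonneg (mul_nonneg (hD0 _) (hE0 _)) (mul_nonneg (hD0 _) (hE0 _))
    set S : ℤ := ∑ i : V, D i * E i with hSdef
    have hS0 : 0 ≤ S := Finset.sum_nonneg (fun i _ => mul_nonneg (hD0 i) (hE0 i))
    show 2 * S - ∑ a : A, f a < 0
    rcases eq_or_lt_of_le hS0 with h0 | hpos
    · -- S = 0 case
      obtain ⟨i, hi⟩ : ∃ i, d i ≠ 0 := by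
        by_contra h; push_neg at h; exact hd (funext h)
      obtain ⟨j, hj⟩ : ∃ j, e j ≠ 0 := by
        by_contra h; push_neg at h; exact he (funext h)
      have hterm : ∀ k ∈ Finset.univ, D k * E k = 0 := by
        rw [← Finset.sum_eq_zero_iff_of_nonneg
          (fun k _ => mul_nonneg (hD0 k) (hE0 k))]
        exact h0.symm
      have hij : i ≠ j := by
        rintro rfl
        have h' := hterm i (Finset.mem_univ i)
        rcases mul_eq_zero.mp h' with hc | hc
        · exact hi (Nat.cast_eq_zero.mp hc)
        · exact hj (Nat.cast_eq_zero.mp hc)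
      obtain ⟨a, ha⟩ := harr i j hij
      have hDi : 0 < D i := by
        have h' : 0 < d i := Nat.pos_of_ne_zero hi
        simp only [hD]
        exact_mod_cast h'
      have hEj : 0 < E j := by
        have h' : 0 < e j := Nat.pos_of_ne_zero hj
        simp only [hE]
        exact_mod_cast h'
      have hfa : 0 < f a := by
        rcases ha with ⟨h1, h2⟩ | ⟨h1, h2⟩
        · have hp : 0 < D (src a) * E (tgt a) := by rw [h1, h2]; exact mul_pos hDi hEj
          have h4 := mul_nonneg (hD0 (tgt a)) (hE0 (src a))
          simp only [hf]; linarith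
        · have hp : 0 < D (tgt a) * E (src a) := by rw [h1, h2]; exact mul_pos hDi hEj
          have h4 := mul_nonneg (hD0 (src a)) (hE0 (tgt a))
          simp only [hf]; linarith
      have hle : f a ≤ ∑ a : A, f a :=
        Finset.single_le_sum (fun a _ => hf0 a) (Finset.mem_univ a)
      linarith
    · -- S > 0 case: use the loops
      have key : ∀ i : V, 4 * (D i * E i) ≤
          ∑ a ∈ Finset.univ.filter (fun a => src a = i), f a := by
        intro i
        have step1 : ∑ a ∈ Finset.univ.filter (fun a : A => src a = i ∧ tgt a = i), f a
            ≤ ∑ a ∈ Finset.univ.filter (fun a : A => src a = i), f a := by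
          apply Finset.sum_le_sum_of_subset_of_nonneg
          · intro a ha
            simp only [Finset.mem_filter] at ha ⊢
            exact ⟨ha.1, ha.2.1⟩
          · exact fun a _ _ => hf0 a
        have step2 : ∑ a ∈ Finset.univ.filter (fun a : A => src a = i ∧ tgt a = i), f a
            = ((Finset.univ.filter (fun a : A => src a = i ∧ tgt a = i)).card : ℤ)
              * (2 * (D i * E i)) := by
          rw [Finset.sum_congr rfl (fun a ha => ?_), Finset.sum_const, nsmul_eq_mul]
          simp only [Finset.mem_filter] at ha
          simp only [hf, ha.2.1, ha.2.2]
          ring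
        have hcard : (2 : ℤ) ≤
            ((Finset.univ.filter (fun a : A => src a = i ∧ tgt a = i)).card : ℤ) := by
          exact_mod_cast hloop i
        have hnn : 0 ≤ 2 * (D i * E i) :=
          mul_nonneg (by norm_num) (mul_nonneg (hD0 i) (hE0 i))
        nlinarith [step1, step2, hcard, hnn]
      have hfib : ∑ i : V, ∑ a ∈ Finset.univ.filter (fun a => src a = i), f a
          = ∑ a : A, f a :=
        Finset.sum_fiberwise_of_maps_to (fun a _ => Finset.mem_univ (src a)) f
      have h4S : 4 * S ≤ ∑ a : A, f a := by
        rw [← hfib, hSdef, Finset.mul_sum]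
        exact Finset.sum_le_sum (fun i _ => key i)
      linarith
end

section
/- Let Q be a quiver, d a dimension vector, μ_{Q,d} : R(Q̄,d) → gl(d) the moment map, X(Q,d) = μ_{Q,d}^{-1}(0), and π_m : X(Q,d)_m → X(Q,d) the truncation map from the m-jet scheme. Then the fiber π_m^{-1}(0) over the origin is isomorphic to R(Q̄,d) × X(Q,d)_{m−2} for m ≥ 2, and to R(Q̄,d) for m = 1. -/
open Finset

/-!
Write a jet as `γ(t) = γ₀ + γ₁ t + ⋯ + γ_m t^m`. Because `μ` is quadratic, when `γ₀ = 0` we have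
`μ(γ(t)) = t² μ(δ(t))` with `δ(t) = γ(t)/t`, so the equations of order `k + 2` on `γ` are the
equations of order `k` on `δ`. The equations of order `≤ m` only involve `γ₁, …, γ_{m-1}`, which
form a jet `δ` of order `m - 2`, while `γ_m` is unconstrained.
-/

section QuadraticJet

variable {M N : Type*} [AddCommMonoid N] (B : M → M → N)

/-- The `t^k`-coefficient of `B(γ(t), γ(t))` for `γ(t) = ∑ γ_j t^j`. -/
def jetCoeff (γ : ℕ → M) (k : ℕ) : N :=
  ∑ pq ∈ antidiagonal k, B (γ pq.1) (γ pq.2)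

variable {B}

lemma jetCoeff_congr {γ γ' : ℕ → M} {k : ℕ} (h : ∀ j ≤ k, γ j = γ' j) :
    jetCoeff B γ k = jetCoeff B γ' k :=
  sum_congr rfl fun pq hpq => by
    rw [HasAntidiagonal.mem_antidiagonal] at hpq
    rw [h pq.1 (by omega), h pq.2 (by omega)]

variable [Zero M]

variable (B) in
/-- `γ` is an `m`-jet of the zero locus of the quadratic map `w ↦ B w w`. -/
def IsJet (m : ℕ) (γ : ℕ → M) : Prop :=
  (∀ k, m < k → γ k = 0) ∧ ∀ k ≤ m, jetCoeff B γ k = 0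

lemma jetCoeff_zero_of_apply_zero (hB : ∀ w, B 0 w = 0) {γ : ℕ → M} (hγ : γ 0 = 0) :
    jetCoeff B γ 0 = 0 := by
  simp [jetCoeff, hγ, hB]

lemma jetCoeff_one_of_apply_zero (hB₁ : ∀ w, B 0 w = 0) (hB₂ : ∀ w, B w 0 = 0) {γ : ℕ → M}
    (hγ : γ 0 = 0) : jetCoeff B γ 1 = 0 := by
  simp [jetCoeff, Nat.sum_antidiagonal_succ, hγ, hB₁, hB₂]

lemma jetCoeff_add_two_of_apply_zero (hB₁ : ∀ w, B 0 w = 0) (hB₂ : ∀ w, B w 0 = 0) {γ : ℕ → M}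
    (hγ : γ 0 = 0) (k : ℕ) :
    jetCoeff B γ (k + 2) = jetCoeff B (fun j => γ (j + 1)) k := by
  simp only [jetCoeff, Nat.antidiagonal_succ_succ', sum_cons, sum_map, hγ, hB₁, hB₂, zero_add]
  rfl

/-- `γ(t)/t` truncated to order `n`. -/
def lowerJet (n : ℕ) (γ : ℕ → M) (j : ℕ) : M :=
  if j ≤ n then γ (j + 1) else 0

/-- `t δ(t) + x t^{n+2}`. -/
def raiseJet (n : ℕ) (x : M) (δ : ℕ → M) : ℕ → M
  | 0 => 0
  | j + 1 => if j = n + 1 then x else δ j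

lemma isJet_lowerJet (hB₁ : ∀ w, B 0 w = 0) (hB₂ : ∀ w, B w 0 = 0) {n : ℕ} {γ : ℕ → M}
    (hγ : IsJet B (n + 2) γ) (hγ₀ : γ 0 = 0) :
    IsJet B n (lowerJet n γ) := by
  refine ⟨fun k hk => if_neg (by omega), fun k hk => ?_⟩
  rw [jetCoeff_congr (γ := lowerJet n γ) (γ' := (γ <| · + 1)) fun j hj => if_pos (by omega),
    ← jetCoeff_add_two_of_apply_zero hB₁ hB₂ hγ₀]
  exact hγ.2 (k + 2) (by omega)

lemma isJet_raiseJet (hB₁ : ∀ w, B 0 w = 0) (hB₂ : ∀ w, B w 0 = 0) {n : ℕ} (x : M) {δ : ℕ → M}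
    (hδ : IsJet B n δ) :
    IsJet B (n + 2) (raiseJet n x δ) := by
  refine ⟨fun k hk => ?_, fun k hk => ?_⟩
  · obtain ⟨j, rfl⟩ : ∃ j, k = j + 1 := ⟨k - 1, by omega⟩
    simp only [raiseJet, if_neg (show j ≠ n + 1 by omega)]
    exact hδ.1 j (by omega)
  rcases k with _ | _ | k
  · exact jetCoeff_zero_of_apply_zero hB₁ rfl
  · exact jetCoeff_one_of_apply_zero hB₁ hB₂ rfl
  rw [jetCoeff_add_two_of_apply_zero hB₁ hB₂ rfl,
    jetCoeff_congr (γ := fun j => raiseJet n x δ (j + 1)) (γ' := δ)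
      fun j hj => if_neg (show j ≠ n + 1 by omega)]
  exact hδ.2 k (by omega)

def jetFiberZeroEquiv (hB₁ : ∀ w, B 0 w = 0) (hB₂ : ∀ w, B w 0 = 0) (n : ℕ) :
    {γ : ℕ → M // IsJet B (n + 2) γ ∧ γ 0 = 0} ≃ M × {δ : ℕ → M // IsJet B n δ} where
  toFun γ := (γ.1 (n + 2), ⟨lowerJet n γ.1, isJet_lowerJet hB₁ hB₂ γ.2.1 γ.2.2⟩)
  invFun xδ := ⟨raiseJet n xδ.1 xδ.2.1, isJet_raiseJet hB₁ hB₂ xδ.1 xδ.2.2, rfl⟩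
  left_inv := by
    rintro ⟨γ, hγ, hγ₀⟩
    ext (_ | j)
    · exact hγ₀.symm
    simp only [raiseJet, lowerJet]
    split_ifs with h₁ h₂
    · rw [h₁]
    · rfl
    · exact (hγ.1 (j + 1) (by omega)).symm
  right_inv := by
    rintro ⟨x, δ, hδ⟩
    ext j
    · simp [raiseJet]
    simp only [lowerJet, raiseJet]
    split_ifs with h₁ h₂
    · omega
    · rfl
    · exact (hδ.1 j (by omega)).symm

def jetFiberZeroEquivOfOrderOne (hB₁ : ∀ w, B 0 w = 0) (hB₂ : ∀ w, B w 0 = 0) :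
    {γ : ℕ → M // IsJet B 1 γ ∧ γ 0 = 0} ≃ M where
  toFun γ := γ.1 1
  invFun x := by
    refine ⟨Pi.single 1 x, ⟨fun k hk => by simp [show k ≠ 1 by omega], fun k hk => ?_⟩, rfl⟩
    interval_cases k
    · exact jetCoeff_zero_of_apply_zero hB₁ rfl
    · exact jetCoeff_one_of_apply_zero hB₁ hB₂ rfl
  left_inv := by
    rintro ⟨γ, hγ, hγ₀⟩
    ext (_ | _ | k)
    · exact hγ₀.symm
    · simp
    · exact (hγ.1 (k + 2) (by omega)).symm
  right_inv x := by simp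

end QuadraticJet

section QuiverMomentMap

variable {V A : Type} [Fintype V] [Fintype A] [DecidableEq V]
  (src tgt : A → V) (d : V → ℕ)

/-- Source map of the doubled quiver `Q̄` (arrows `A ⊕ A`, the second copy
consisting of the reversed arrows `a*`). -/
abbrev dsrc : A ⊕ A → V := fun a => Sum.rec (fun a => src a) (fun a => tgt a) a

/-- Target map of the doubled quiver `Q̄`. -/
abbrev dtgt : A ⊕ A → V := fun a => Sum.rec (fun a => tgt a) (fun a => src a) a

/-- The representation space `R(Q̄,d)` of the doubled quiver over a
commutative ring `R`. -/
abbrev RepSpace (R : Type) [CommRing R] : Type :=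
  ∀ a : A ⊕ A, Matrix (Fin (d (dtgt src tgt a))) (Fin (d (dsrc src tgt a))) R

/-- Transport of a square matrix along an equality of sizes. -/
def castSq {R : Type} [CommRing R] {n n' : ℕ} (h : n = n')
    (M : Matrix (Fin n) (Fin n) R) : Matrix (Fin n') (Fin n') R :=
  M.submatrix (Fin.cast h.symm) (Fin.cast h.symm)

/-- The bilinear version of the moment map of `Q`: its `i`-th component on a
pair `(w, w')` of points of `R(Q̄,d)` is
`∑_{a : t(a) = i} w_a w'_{a*} − ∑_{a : s(a) = i} w_{a*} w'_a`;
the moment map itself is `μ_{Q,d}(w) = momentBil w w`. -/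
def momentBil {R : Type} [CommRing R] (w w' : RepSpace src tgt d R) (i : V) :
    Matrix (Fin (d i)) (Fin (d i)) R :=
  (∑ a : A, if h : tgt a = i then
      castSq (congrArg d h) ((w (Sum.inl a) : Matrix (Fin (d (tgt a))) (Fin (d (src a))) R)
        * (w' (Sum.inr a) : Matrix (Fin (d (src a))) (Fin (d (tgt a))) R)) else 0)
  - ∑ a : A, if h : src a = i then
      castSq (congrArg d h) ((w (Sum.inr a) : Matrix (Fin (d (src a))) (Fin (d (tgt a))) R)
        * (w' (Sum.inl a) : Matrix (Fin (d (tgt a))) (Fin (d (src a))) R)) else 0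

/-- The moment map `μ_{Q,d} : R(Q̄,d) → gl(d)`. -/
def momentMap {R : Type} [CommRing R] (w : RepSpace src tgt d R) (i : V) :
    Matrix (Fin (d i)) (Fin (d i)) R :=
  momentBil src tgt d w w i

variable (K : Type) [Field K]

/-- The `m`-jet space `X(Q,d)_m` of `X(Q,d) = μ_{Q,d}^{-1}(0)`, modelled as
truncated Taylor coefficients: a jet is `γ(t) = γ₀ + γ₁ t + ⋯ + γ_m t^m` with
coefficients in `R(Q̄,d)` such that `μ_{Q,d}(γ(t)) ≡ 0 mod t^{m+1}`, i.e. for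
every `k ≤ m` the `t^k`-coefficient `∑_{p+q=k} B(γ_p, γ_q)` of the quadratic
map `μ` vanishes, where `B` is its bilinearization. -/
abbrev JetSpace (m : ℕ) : Type :=
  { γ : ℕ → RepSpace src tgt d K //
      (∀ k, m < k → γ k = 0) ∧
      ∀ k ≤ m, ∀ i : V,
        ∑ pq ∈ Finset.HasAntidiagonal.antidiagonal k, momentBil src tgt d (γ pq.1) (γ pq.2) i = 0 }

set_option linter.unusedSectionVars false in
lemma momentBil_zero_left {R : Type} [CommRing R] (w : RepSpace src tgt d R) :
    momentBil src tgt d 0 w = 0 := by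
  ext i
  simp [momentBil, castSq]

set_option linter.unusedSectionVars false in
lemma momentBil_zero_right {R : Type} [CommRing R] (w : RepSpace src tgt d R) :
    momentBil src tgt d w 0 = 0 := by
  ext i
  simp [momentBil, castSq]

def jetSpaceEquiv (m : ℕ) :
    JetSpace src tgt d K m ≃ {γ : ℕ → RepSpace src tgt d K // IsJet (momentBil src tgt d) m γ} :=
  Equiv.subtypeEquivRight fun γ => and_congr_right' <| forall₂_congr fun k _ => by
    simp only [jetCoeff, funext_iff, Finset.sum_apply, Pi.zero_apply]

def jetSpaceFiberZeroEquiv (m : ℕ) :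
    {γ : JetSpace src tgt d K m // γ.1 0 = 0}
      ≃ {γ : ℕ → RepSpace src tgt d K // IsJet (momentBil src tgt d) m γ ∧ γ 0 = 0} :=
  ((jetSpaceEquiv src tgt d K m).subtypeEquiv fun _ => Iff.rfl).trans
    (Equiv.subtypeSubtypeEquivSubtypeInter _ fun γ => γ 0 = 0)

/-- **Lemma 3.5 (fibers of the jet truncation over the origin).**
Let `π_m : X(Q,d)_m → X(Q,d)` be the truncation map of the `m`-jet space of
the zero fiber of the moment map of `Q`.  Then `π_m^{-1}(0) ≅ R(Q̄,d) × X(Q,d)_{m-2}`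
for `m ≥ 2`, and `π_1^{-1}(0) ≅ R(Q̄,d)`. -/
theorem stmt_10 :
    (∀ m : ℕ, 2 ≤ m →
      Nonempty (({ γ : JetSpace src tgt d K m // γ.1 0 = 0 })
        ≃ (RepSpace src tgt d K) × JetSpace src tgt d K (m - 2)))
    ∧ Nonempty (({ γ : JetSpace src tgt d K 1 // γ.1 0 = 0 })
        ≃ RepSpace src tgt d K) := by
  have hB₁ := momentBil_zero_left src tgt d (R := K)
  have hB₂ := momentBil_zero_right src tgt d (R := K)
  refine ⟨fun m hm => ?_,
    ⟨(jetSpaceFiberZeroEquiv src tgt d K 1).trans (jetFiberZeroEquivOfOrderOne hB₁ hB₂)⟩⟩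
  obtain ⟨n, rfl⟩ := Nat.exists_eq_add_of_le' hm
  exact ⟨(jetSpaceFiberZeroEquiv src tgt d K (n + 2)).trans <|
    (jetFiberZeroEquiv hB₁ hB₂ n).trans <|
    (Equiv.refl _).prodCongr (jetSpaceEquiv src tgt d K n).symm⟩

end QuiverMomentMap
end

section
/- Let Q be a totally negative quiver (at least two loops at each vertex, at least one arrow between any two distinct vertices) and d a nonzero dimension vector such that whenever supp(d) contains two vertices joined by exactly one arrow, d restricted to supp(d) is not (1,1). Then d does not satisfy any of the three obstructions of Crawley-Boevey's criterion: (1) supp(d) is not an extended Dynkin quiver with d = mδ, m ≥ 2; (2) supp(d) does not split as (Q_0)' ⊔ (Q_0)'' joined by a unique arrow at vertices i', i'' with d_{i'} = d_{i''} = 1; (3) supp(d) does not split as in (2) with d_{i'} = 1 and the other part extended Dynkin with d = mδ there, m ≥ 2. -/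
open Finset

/-- The full subquiver on a set `S` of vertices is an extended Dynkin quiver
with minimal imaginary root `δ`: it is connected, its Tits form (the
symmetrized Euler form on vectors supported on `S`) is positive semidefinite,
`δ` is a nonzero radical vector supported on `S`, and every radical vector
supported on `S` is a rational multiple of `δ`. -/
def IsExtendedDynkinOn {V A : Type} [Fintype V] [Fintype A] [DecidableEq V]
    (src tgt : A → V) (S : Finset V) (δ : V → ℕ) : Prop :=
  (∀ i j, i ∈ S → j ∈ S → Relation.ReflTransGen
      (fun x y : V => x ∈ S ∧ y ∈ S ∧
        ∃ a : A, (src a = x ∧ tgt a = y) ∨ (src a = y ∧ tgt a = x)) i j)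
    ∧ (∀ i ∉ S, δ i = 0) ∧ δ ≠ 0
    ∧ (∀ x : V → ℤ, (∀ i ∉ S, x i = 0) → 0 ≤ symEulerForm src tgt x x)
    ∧ symEulerForm src tgt (fun i => (δ i : ℤ)) (fun i => (δ i : ℤ)) = 0
    ∧ (∀ x : V → ℤ, (∀ i ∉ S, x i = 0) → symEulerForm src tgt x x = 0 →
        ∃ p q : ℤ, q ≠ 0 ∧ ∀ i, q * x i = p * (δ i : ℤ))

lemma no_extDynkin {V A : Type} [Fintype V] [Fintype A] [DecidableEq V]
    (src tgt : A → V)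
    (hloops : ∀ i : V, 2 ≤ (Finset.univ.filter
        (fun a : A => src a = i ∧ tgt a = i)).card)
    (S : Finset V) (δ : V → ℕ) : ¬ IsExtendedDynkinOn src tgt S δ := by
  rintro ⟨-, hsupp, hδ0, hpsd, -, -⟩
  obtain ⟨i₀, hi₀⟩ : ∃ i, i ∈ S := by
    by_contra h
    push_neg at h
    exact hδ0 (funext fun i => hsupp i (h i))
  set x : V → ℤ := fun i => if i = i₀ then 1 else 0 with hx
  have h1 : ∀ i ∉ S, x i = 0 := by
    intro i hi
    simp only [hx]
    rw [if_neg]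
    rintro rfl
    exact hi hi₀
  have hle := hpsd x h1
  have hsum1 : ∑ i : V, x i * x i = 1 := by
    simp [hx, ite_and, Finset.sum_ite_eq']
  have hsum2 : ∑ a : A, x (src a) * x (tgt a) =
      ((Finset.univ.filter (fun a : A => src a = i₀ ∧ tgt a = i₀)).card : ℤ) := by
    rw [Finset.card_filter]
    push_cast
    refine Finset.sum_congr rfl fun a _ => ?_
    simp only [hx]
    split_ifs with h1 h2 h3 <;> simp_all
  have hcard := hloops i₀
  simp only [symEulerForm, eulerForm, hsum1, hsum2] at hle
  omega

/-- **Property (P) rules out the three obstructions of Crawley-Boevey's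
criterion** (Proposition 2.6): if `Q` is totally negative and `d` is a nonzero
dimension vector such that whenever the support of `d` consists of two
vertices joined by exactly one arrow, `d` restricted to its support is not
`(1,1)`, then: (1) the support of `d` is not an extended Dynkin quiver with
`d = m δ`, `m ≥ 2`; (2) the support of `d` does not split into two nonempty
parts joined by a unique arrow at vertices `i', i''` with `d i' = d i'' = 1`;
(3) the support of `d` does not split as in (2) with `d i' = 1` and the part
containing `i''` extended Dynkin with `d = m δ` there, `m ≥ 2`. -/
theorem stmt_17 {V A : Type} [Fintype V] [Fintype A] [DecidableEq V]
    (src tgt : A → V)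
    (hloops : ∀ i : V, 2 ≤ (Finset.univ.filter
        (fun a : A => src a = i ∧ tgt a = i)).card)
    (harrows : ∀ i j : V, i ≠ j →
        ∃ a : A, (src a = i ∧ tgt a = j) ∨ (src a = j ∧ tgt a = i))
    (d : V → ℕ) (hd : d ≠ 0)
    (hP : ∀ i j : V, i ≠ j →
        Finset.univ.filter (fun k => d k ≠ 0) = {i, j} →
        (Finset.univ.filter (fun a : A =>
            (src a = i ∧ tgt a = j) ∨ (src a = j ∧ tgt a = i))).card = 1 →
        ¬(d i = 1 ∧ d j = 1)) :
    -- (1)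
    (¬ ∃ (m : ℕ) (δ : V → ℕ), 2 ≤ m
        ∧ IsExtendedDynkinOn src tgt (Finset.univ.filter (fun k => d k ≠ 0)) δ
        ∧ ∀ i, d i = m * δ i)
    -- (2)
    ∧ (¬ ∃ (S' S'' : Finset V) (i' i'' : V),
        S' ∪ S'' = Finset.univ.filter (fun k => d k ≠ 0)
        ∧ Disjoint S' S'' ∧ S'.Nonempty ∧ S''.Nonempty
        ∧ i' ∈ S' ∧ i'' ∈ S''
        ∧ (Finset.univ.filter (fun a : A =>
            (src a ∈ S' ∧ tgt a ∈ S'') ∨ (src a ∈ S'' ∧ tgt a ∈ S'))).card = 1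
        ∧ (∀ a : A, ((src a ∈ S' ∧ tgt a ∈ S'') ∨ (src a ∈ S'' ∧ tgt a ∈ S')) →
            ({src a, tgt a} : Finset V) = {i', i''})
        ∧ d i' = 1 ∧ d i'' = 1)
    -- (3)
    ∧ (¬ ∃ (S' S'' : Finset V) (i' i'' : V) (m : ℕ) (δ : V → ℕ),
        S' ∪ S'' = Finset.univ.filter (fun k => d k ≠ 0)
        ∧ Disjoint S' S'' ∧ S'.Nonempty ∧ S''.Nonempty
        ∧ i' ∈ S' ∧ i'' ∈ S''
        ∧ (Finset.univ.filter (fun a : A =>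
            (src a ∈ S' ∧ tgt a ∈ S'') ∨ (src a ∈ S'' ∧ tgt a ∈ S'))).card = 1
        ∧ (∀ a : A, ((src a ∈ S' ∧ tgt a ∈ S'') ∨ (src a ∈ S'' ∧ tgt a ∈ S')) →
            ({src a, tgt a} : Finset V) = {i', i''})
        ∧ d i' = 1 ∧ 2 ≤ m
        ∧ IsExtendedDynkinOn src tgt S'' δ
        ∧ ∀ i ∈ S'', d i = m * δ i) := by
  refine ⟨?_, ?_, ?_⟩
  · rintro ⟨m, δ, -, hED, -⟩
    exact no_extDynkin src tgt hloops _ δ hED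
  · rintro ⟨S', S'', i', i'', hunion, hdisj, hS', hS'', hi', hi'', hcard, harr,
      hd1, hd2⟩
    have hne : i' ≠ i'' := by
      rintro rfl
      exact Finset.disjoint_left.mp hdisj hi' hi''
    have key : ∀ (T T' : Finset V) (j j' : V), Disjoint T T' → j ∈ T → j' ∈ T' →
        (∀ a : A, ((src a ∈ T ∧ tgt a ∈ T') ∨ (src a ∈ T' ∧ tgt a ∈ T)) →
          ({src a, tgt a} : Finset V) = {j, j'}) → T = {j} := by
      intro T T' j j' hdis hj hj' harr'
      apply Finset.eq_singleton_iff_unique_mem.mpr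
      refine ⟨hj, fun k hk => ?_⟩
      by_contra hkj
      have hkj' : k ≠ j' := by
        rintro rfl
        exact Finset.disjoint_left.mp hdis hk hj'
      obtain ⟨a, ha⟩ := harrows k j' hkj'
      have hcross : (src a ∈ T ∧ tgt a ∈ T') ∨ (src a ∈ T' ∧ tgt a ∈ T) := by
        rcases ha with ⟨h1, h2⟩ | ⟨h1, h2⟩
        · exact Or.inl ⟨h1 ▸ hk, h2 ▸ hj'⟩
        · exact Or.inr ⟨h1 ▸ hj', h2 ▸ hk⟩
      have heq := harr' a hcross
      have hkmem : k ∈ ({j, j'} : Finset V) := by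
        rw [← heq]
        rcases ha with ⟨h1, -⟩ | ⟨-, h2⟩
        · simp [h1]
        · simp [h2]
      simp only [Finset.mem_insert, Finset.mem_singleton] at hkmem
      tauto
    have hS'eq : S' = {i'} := key S' S'' i' i'' hdisj hi' hi'' harr
    have hS''eq : S'' = {i''} := by
      refine key S'' S' i'' i' hdisj.symm hi'' hi' fun a ha => ?_
      have := harr a (by tauto)
      rw [this]
      ext k
      simp only [Finset.mem_insert, Finset.mem_singleton]
      tauto
    have hsuppeq : Finset.univ.filter (fun k => d k ≠ 0) = {i', i''} := by
      rw [← hunion, hS'eq, hS''eq]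
      rfl
    have hcard' : (Finset.univ.filter (fun a : A =>
        (src a = i' ∧ tgt a = i'') ∨ (src a = i'' ∧ tgt a = i'))).card = 1 := by
      rw [← hcard]
      congr 1
      apply Finset.filter_congr
      intro a _
      simp [hS'eq, hS''eq]
    exact hP i' i'' hne hsuppeq hcard' ⟨hd1, hd2⟩
  · rintro ⟨S', S'', i', i'', m, δ, -, -, -, -, -, -, -, -, -, -, hED, -⟩
    exact no_extDynkin src tgt hloops S'' δ hED
end

section
/- Let d₁, ..., d_r ≥ 1, and at each vertex i let g_i ≥ 2 be the number of loops, with r_{ij} ≥ 1 arrows between distinct vertices i, j, and let d not be (1,...,1). For each i, let m_{s_{i-1}+1}, ..., m_{s_i} be positive integers summing to d_i. Then Σ_i [g_i(d_i² + Σ_{s in block i} m_s² − 2) − 2(d_i² − 1) − Σ_{consecutive in block i} m_s m_{s-1}] + Σ_{i≠j} r_{ij} d_i d_j − 2(r−1) > 0. -/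
open Finset

lemma aux_block (m : ℕ → ℤ) (h : ℕ) (hh : 1 ≤ h) :
    (∀ s < h, 1 ≤ m s) →
    (m (h - 1)) ^ 2 - m (h - 1) + 1 + ∑ s ∈ Finset.range h, m s
      ≤ 2 * ∑ s ∈ Finset.range h, (m s) ^ 2
        - ∑ s ∈ Finset.Ico 1 h, m s * m (s - 1) := by
  induction h, hh using Nat.le_induction with
  | base =>
    intro hm
    simp only [Finset.sum_range_one, Finset.Ico_self, Finset.sum_empty]
    have := hm 0 one_pos
    nlinarith
  | succ n hn ih =>
    intro hm
    have H := ih (fun s hs => hm s (Nat.lt_succ_of_lt hs))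
    rw [Finset.sum_range_succ, Finset.sum_range_succ,
      Finset.sum_Ico_succ_top (by omega)]
    have h1 : 1 ≤ m n := hm n (Nat.lt_succ_self n)
    have h2 : 1 ≤ m (n - 1) := hm (n - 1) (by omega)
    simp only [Nat.add_sub_cancel]
    nlinarith [sq_nonneg (m (n - 1) - m n)]

/-- **Combined inequality proving Lemma 3.4** (`dim Z(Q,d) < dim M(Q,d)` for
totally negative quivers with sincere `d ≠ (1,…,1)`): with `gᵢ ≥ 2` loops at
each vertex `i`, `rᵢⱼ ≥ 1` arrows between distinct vertices, `dᵢ ≥ 1`, the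
block of positive multiplicities `(m i s)_{s < h i}` at vertex `i` summing to
`dᵢ`, and `d` not equal to `(1,…,1)`, one has
`∑ᵢ [gᵢ (dᵢ² + ∑ₛ m_{i,s}² − 2) − 2 (dᵢ² − 1) − ∑ m_{i,s} m_{i,s-1}]
  + ∑_{i≠j} rᵢⱼ dᵢ dⱼ − 2 (r − 1) > 0`. -/
theorem stmt_18 (r : ℕ) (hr : 1 ≤ r)
    (d : Fin r → ℤ) (hd : ∀ i, 1 ≤ d i)
    (g : Fin r → ℤ) (hg : ∀ i, 2 ≤ g i)
    (rij : Fin r → Fin r → ℤ) (hrij : ∀ i j, i ≠ j → 1 ≤ rij i j)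
    (h : Fin r → ℕ) (m : Fin r → ℕ → ℤ)
    (hm : ∀ i, ∀ s < h i, 1 ≤ m i s)
    (hsum : ∀ i, ∑ s ∈ Finset.range (h i), m i s = d i)
    (hne : ∃ i, d i ≠ 1) :
    0 < (∑ i : Fin r,
          (g i * (d i ^ 2 + (∑ s ∈ Finset.range (h i), (m i s) ^ 2) - 2)
            - 2 * (d i ^ 2 - 1)
            - ∑ s ∈ Finset.Ico 1 (h i), m i s * m i (s - 1)))
        + (∑ i : Fin r, ∑ j ∈ Finset.univ.filter (fun j => j ≠ i),
            rij i j * d i * d j)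
        - 2 * ((r : ℤ) - 1) := by
  -- per-vertex bound
  have hterm : ∀ i : Fin r, d i - 1 ≤
      g i * (d i ^ 2 + (∑ s ∈ Finset.range (h i), (m i s) ^ 2) - 2)
        - 2 * (d i ^ 2 - 1)
        - ∑ s ∈ Finset.Ico 1 (h i), m i s * m i (s - 1) := by
    intro i
    have hhi : 1 ≤ h i := by
      by_contra hc
      have h0 : h i = 0 := by omega
      have := hsum i
      rw [h0] at this
      simp at this
      have := hd i
      omega
    have A := aux_block (m i) (h i) hhi (hm i)
    rw [hsum i] at A
    have hQ : d i ≤ ∑ s ∈ Finset.range (h i), (m i s) ^ 2 := by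
      rw [← hsum i]
      apply Finset.sum_le_sum
      intro s hs
      have := hm i s (Finset.mem_range.mp hs)
      nlinarith
    have hd2 : 1 ≤ d i := hd i
    have hg2 : 2 ≤ g i := hg i
    have ha : 1 ≤ m i (h i - 1) := hm i (h i - 1) (by omega)
    have hbase : (0:ℤ) ≤ d i ^ 2 + (∑ s ∈ Finset.range (h i), (m i s) ^ 2) - 2 := by
      nlinarith
    have hmul := mul_le_mul_of_nonneg_right hg2 hbase
    nlinarith
  -- cross-term bound
  have hcross : ∀ i : Fin r, ((r : ℤ) - 1) ≤
      ∑ j ∈ Finset.univ.filter (fun j => j ≠ i), rij i j * d i * d j := by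
    intro i
    have hcard : (Finset.univ.filter (fun j => j ≠ i)).card = r - 1 := by
      rw [Finset.filter_ne', Finset.card_erase_of_mem (Finset.mem_univ i),
        Finset.card_univ, Fintype.card_fin]
    calc ((r : ℤ) - 1) = ∑ _j ∈ Finset.univ.filter (fun j => j ≠ i), (1 : ℤ) := by
          rw [Finset.sum_const, hcard, nsmul_eq_mul, mul_one,
            Nat.cast_sub hr, Nat.cast_one]
      _ ≤ _ := by
          apply Finset.sum_le_sum
          intro j hj
          have hji : j ≠ i := (Finset.mem_filter.mp hj).2
          have h1 := hrij i j (Ne.symm hji)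
          have h2 := hd i
          have h3 := hd j
          have h4 : (1:ℤ) ≤ rij i j * d i := by nlinarith
          nlinarith
  have hS1 : ∑ i : Fin r, (d i - 1) ≤ ∑ i : Fin r,
      (g i * (d i ^ 2 + (∑ s ∈ Finset.range (h i), (m i s) ^ 2) - 2)
        - 2 * (d i ^ 2 - 1)
        - ∑ s ∈ Finset.Ico 1 (h i), m i s * m i (s - 1)) :=
    Finset.sum_le_sum fun i _ => hterm i
  have hS2 : (r : ℤ) * ((r : ℤ) - 1) ≤
      ∑ i : Fin r, ∑ j ∈ Finset.univ.filter (fun j => j ≠ i),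
        rij i j * d i * d j := by
    calc (r : ℤ) * ((r : ℤ) - 1) = ∑ _i : Fin r, ((r : ℤ) - 1) := by
          rw [Finset.sum_const, Finset.card_univ, Fintype.card_fin,
            nsmul_eq_mul]
      _ ≤ _ := Finset.sum_le_sum fun i _ => hcross i
  have hdsum : 1 ≤ ∑ i : Fin r, (d i - 1) := by
    obtain ⟨i0, hi0⟩ := hne
    have h1 : 1 ≤ d i0 - 1 := by have := hd i0; omega
    refine le_trans h1 (Finset.single_le_sum (f := fun i => d i - 1) (fun i _ => ?_) (Finset.mem_univ i0))
    show (0:ℤ) ≤ d i - 1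
    have := hd i
    omega
  have hr2 : (0 : ℤ) ≤ ((r : ℤ) - 1) * ((r : ℤ) - 2) := by
    rcases le_or_gt 2 r with h2 | h2
    · have : (2 : ℤ) ≤ (r : ℤ) := by exact_mod_cast h2
      nlinarith
    · have : r = 1 := by omega
      subst this
      norm_num
  nlinarith
end
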